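/- Let n ≥ 1, let U : ℝⁿ → ℝ be continuously differentiable, let f_U : ℝⁿ → ℝⁿ be continuous with ⟨∇U(x), f_U(x)⟩ ≤ 0 for all x ∈ ℝⁿ, set f := -∇U + f_U, and fix σ > 0 and points a, x ∈ ℝⁿ. Define the quasi-potential Q_a(x) as the infimum, over all T > 0 and all C¹ paths φ : [0,T] → ℝⁿ with φ(0) = a and φ(T) = x, of the action S(φ) = (1/σ²)·∫₀ᵀ ‖φ̇(t) − f(φ(t))‖² dt. Then Q_a(x) ≥ (4/σ²)·(U(x) − U(a)). -/

import Mathlib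

open MeasureTheory
open scoped RealInnerProductSpace

/-!
Along a C¹ path `φ` from `a` to `x`, the fundamental theorem of calculus gives
`U x - U a = ∫ ⟪∇U(φ), φ'⟫`. Writing `φ' - f(φ) = (φ' - f_U(φ)) + ∇U(φ)` and expanding the square,
`‖φ' - f(φ)‖² = ‖φ' - f_U(φ) - ∇U(φ)‖² + 4⟪∇U(φ), φ'⟫ - 4⟪∇U(φ), f_U(φ)⟫ ≥ 4⟪∇U(φ), φ'⟫`
by sub-orthogonality. Integrating, every action is at least `(4/σ²)(U x - U a)`.
-/

section Gradient

variable {E : Type*} [NormedAddCommGroup E] [InnerProductSpace ℝ E] [CompleteSpace E]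

theorem ContDiff.continuous_gradient {U : E → ℝ} (hU : ContDiff ℝ 1 U) :
    Continuous (gradient U) :=
  (InnerProductSpace.toDual ℝ E).symm.continuous.comp (hU.continuous_fderiv one_ne_zero)

theorem HasGradientAt.comp_hasDerivWithinAt {U : E → ℝ} {g : E} {φ : ℝ → E} {v : E}
    {s : Set ℝ} {t : ℝ} (hU : HasGradientAt U g (φ t)) (hφ : HasDerivWithinAt φ v s t) :
    HasDerivWithinAt (fun t => U (φ t)) ⟪g, v⟫ s t := by
  have h := hU.hasFDerivAt.comp_hasDerivWithinAt t hφ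
  simp only [InnerProductSpace.toDual_apply_apply] at h
  exact h

theorem integral_inner_gradient_comp_eq_sub {U : E → ℝ} (hU : ContDiff ℝ 1 U)
    {φ φ' : ℝ → E} {a b : ℝ} (hab : a ≤ b)
    (hφ : ∀ t ∈ Set.Icc a b, HasDerivWithinAt φ (φ' t) (Set.Icc a b) t)
    (hφ' : ContinuousOn φ' (Set.Icc a b)) :
    ∫ t in a..b, ⟪gradient U (φ t), φ' t⟫ = U (φ b) - U (φ a) := by
  have hφc : ContinuousOn φ (Set.Icc a b) := fun t ht => (hφ t ht).continuousWithinAt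
  have hUφ (t : ℝ) (ht : t ∈ Set.Icc a b) :
      HasDerivWithinAt (fun t => U (φ t)) ⟪gradient U (φ t), φ' t⟫ (Set.Icc a b) t :=
    ((hU.differentiable one_ne_zero) (φ t)).hasGradientAt.comp_hasDerivWithinAt (hφ t ht)
  refine intervalIntegral.integral_eq_sub_of_hasDeriv_right_of_le hab
    (hU.continuous.comp_continuousOn hφc) (fun t ht => ?_) ?_
  · exact ((hUφ t (Set.Ioo_subset_Icc_self ht)).hasDerivAt
      (Icc_mem_nhds ht.1 ht.2)).hasDerivWithinAt
  · exact ContinuousOn.intervalIntegrable_of_Icc hab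
      ((hU.continuous_gradient.comp_continuousOn hφc).inner hφ')

end Gradient

theorem four_mul_inner_le_norm_sub_neg_add_sq {E : Type*} [NormedAddCommGroup E]
    [InnerProductSpace ℝ E] {g h : E} (hgh : ⟪g, h⟫ ≤ 0) (v : E) :
    4 * ⟪g, v⟫ ≤ ‖v - (-g + h)‖ ^ 2 := by
  calc 4 * ⟪g, v⟫ ≤ ‖(v - h) - g‖ ^ 2 + 4 * (⟪g, v⟫ - ⟪g, h⟫) := by
        linarith [sq_nonneg ‖(v - h) - g‖]
    _ = ‖(v - h) + g‖ ^ 2 := by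
        rw [norm_add_sq_real, norm_sub_sq_real, inner_sub_left, real_inner_comm v,
          real_inner_comm h]
        ring
    _ = ‖v - (-g + h)‖ ^ 2 := by rw [sub_add_eq_sub_sub_swap, sub_neg_eq_add]

theorem four_mul_sub_le_integral_norm_sub_sq {E : Type*} [NormedAddCommGroup E]
    [InnerProductSpace ℝ E] [CompleteSpace E] {U : E → ℝ} (hU : ContDiff ℝ 1 U) {fU : E → E}
    (hfU : Continuous fU) (hsub : ∀ y, ⟪gradient U y, fU y⟫ ≤ 0)
    {φ φ' : ℝ → E} {a b : ℝ} (hab : a ≤ b)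
    (hφ : ∀ t ∈ Set.Icc a b, HasDerivWithinAt φ (φ' t) (Set.Icc a b) t)
    (hφ' : ContinuousOn φ' (Set.Icc a b)) :
    4 * (U (φ b) - U (φ a)) ≤ ∫ t in a..b, ‖φ' t - (-gradient U (φ t) + fU (φ t))‖ ^ 2 := by
  have hφc : ContinuousOn φ (Set.Icc a b) := fun t ht => (hφ t ht).continuousWithinAt
  have hfc : Continuous fun y => -gradient U y + fU y := hU.continuous_gradient.neg.add hfU
  calc 4 * (U (φ b) - U (φ a)) = ∫ t in a..b, 4 * ⟪gradient U (φ t), φ' t⟫ := by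
        rw [intervalIntegral.integral_const_mul,
          integral_inner_gradient_comp_eq_sub hU hab hφ hφ']
    _ ≤ ∫ t in a..b, ‖φ' t - (-gradient U (φ t) + fU (φ t))‖ ^ 2 := by
        refine intervalIntegral.integral_mono_on hab ?_ ?_
          fun t _ => four_mul_inner_le_norm_sub_neg_add_sq (hsub (φ t)) (φ' t)
        · exact (ContinuousOn.intervalIntegrable_of_Icc hab
            ((hU.continuous_gradient.comp_continuousOn hφc).inner hφ')).const_mul 4
        · exact ContinuousOn.intervalIntegrable_of_Icc hab
            ((hφ'.sub (hfc.comp_continuousOn hφc)).norm.pow 2)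

theorem quasipotential_lower_bound_general (n : ℕ)
    (U : EuclideanSpace ℝ (Fin n) → ℝ) (hU : ContDiff ℝ 1 U)
    (fU : EuclideanSpace ℝ (Fin n) → EuclideanSpace ℝ (Fin n)) (hfU : Continuous fU)
    (hsub : ∀ x, ⟪gradient U x, fU x⟫ ≤ 0)
    (f : EuclideanSpace ℝ (Fin n) → EuclideanSpace ℝ (Fin n))
    (hf : ∀ x, f x = -gradient U x + fU x)
    (σ : ℝ) (a x : EuclideanSpace ℝ (Fin n)) :
    (4/σ^2) * (U x - U a) ≤
      sInf {s : ℝ | ∃ T : ℝ, 0 < T ∧ ∃ φ φ' : ℝ → EuclideanSpace ℝ (Fin n),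
        (∀ t ∈ Set.Icc (0:ℝ) T, HasDerivWithinAt φ (φ' t) (Set.Icc (0:ℝ) T) t) ∧
        ContinuousOn φ' (Set.Icc (0:ℝ) T) ∧
        φ 0 = a ∧ φ T = x ∧
        s = (1/σ^2) * ∫ t in (0:ℝ)..T, ‖φ' t - f (φ t)‖^2} := by
  obtain rfl : f = fun y => -gradient U y + fU y := funext hf
  refine le_csInf ⟨_, 1, one_pos, AffineMap.lineMap a x, fun _ => x - a,
    fun _ _ => AffineMap.hasDerivWithinAt_lineMap, continuousOn_const,
    AffineMap.lineMap_apply_zero a x, AffineMap.lineMap_apply_one a x, rfl⟩ ?_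
  rintro s ⟨T, hT, φ, φ', hφ, hφ', rfl, rfl, rfl⟩
  calc (4/σ^2) * (U (φ T) - U (φ 0)) = (1/σ^2) * (4 * (U (φ T) - U (φ 0))) := by ring
    _ ≤ _ := by
        gcongr
        exact four_mul_sub_le_integral_norm_sub_sq hU hfU hsub hT.le hφ hφ'

/-- under a sub-orthogonal decomposition `f = -∇U + f_U`, the
quasi-potential `Q_a(x)` (the infimum of the Freidlin–Wentzell action over all
times `T > 0` and C¹ paths from `a` to `x`) is bounded below by
`(4/σ²)·(U(x) − U(a))`. -/
theorem quasipotential_lower_bound (n : ℕ) (hn : 1 ≤ n)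
    (U : EuclideanSpace ℝ (Fin n) → ℝ) (hU : ContDiff ℝ 1 U)
    (fU : EuclideanSpace ℝ (Fin n) → EuclideanSpace ℝ (Fin n)) (hfU : Continuous fU)
    (hsub : ∀ x, ⟪gradient U x, fU x⟫ ≤ 0)
    (f : EuclideanSpace ℝ (Fin n) → EuclideanSpace ℝ (Fin n))
    (hf : ∀ x, f x = -gradient U x + fU x)
    (σ : ℝ) (hσ : 0 < σ) (a x : EuclideanSpace ℝ (Fin n)) :
    (4/σ^2) * (U x - U a) ≤
      sInf {s : ℝ | ∃ T : ℝ, 0 < T ∧ ∃ φ φ' : ℝ → EuclideanSpace ℝ (Fin n),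
        (∀ t ∈ Set.Icc (0:ℝ) T, HasDerivWithinAt φ (φ' t) (Set.Icc (0:ℝ) T) t) ∧
        ContinuousOn φ' (Set.Icc (0:ℝ) T) ∧
        φ 0 = a ∧ φ T = x ∧
        s = (1/σ^2) * ∫ t in (0:ℝ)..T, ‖φ' t - f (φ t)‖^2} :=
  quasipotential_lower_bound_general n U hU fU hfU hsub f hf σ a x
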